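/- arXiv:1203.2257 — 2 statements merged into one kernel-verified Lean document; each statement's English description precedes it below -/
import Mathlib

section
/- For an increasing sequence b of positive integers, the IP-Dirichlet set Γ(FS(b)) := {t ∈ ℝ/ℤ : e^{2πi n t} → 1 as min F → ∞ along n = b(F), F finite} equals the group G₁(b) := {t : ∑_{n≥1} ‖b_n t‖ < ∞}. -/
/-- distance from a real number to the nearest integer -/
noncomputable def nint (x : ℝ) : ℝ := |x - round x|

/-!
If `∑ ‖x_n‖` converges, then `‖∑_{j ∈ F} x_j‖ ≤ ∑_{j ∈ F} ‖x_j‖` is bounded by a tail of that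
series. Conversely, write `x_j = y_j + m_j` with `m_j ∈ ℤ` and `|y_j| ≤ 1/2`, and suppose every
finite sum of the `x_j` with `j ≥ K` lies within `1/8` of an integer. Then so does every finite sum
of the `y_j`, and a sum of `y_j`'s of one sign, built up one term at a time, never gets past `1/4`,
so it is below `1/8`. Hence `∑_{j ≥ K} |y_j| ≤ 1/4`.
-/

open Finset

lemma nint_le_abs_sub_intCast (x : ℝ) (n : ℤ) : nint x ≤ |x - n| := round_le x n

lemma nint_sub_intCast (x : ℝ) (n : ℤ) : nint (x - n) = nint x := by
  simp [nint, round_sub_intCast, sub_sub]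

lemma nint_neg (x : ℝ) : nint (-x) = nint x := by
  have hle (x : ℝ) : nint (-x) ≤ nint x :=
    (nint_le_abs_sub_intCast (-x) (-round x)).trans_eq (by rw [nint, ← abs_neg]; push_cast; ring_nf)
  exact le_antisymm (hle x) (by simpa using hle (-x))

lemma nint_add_le (x y : ℝ) : nint (x + y) ≤ nint x + nint y :=
  calc nint (x + y) ≤ |(x - round x) + (y - round y)| := by
        simpa [add_sub_add_comm] using nint_le_abs_sub_intCast (x + y) (round x + round y)
    _ ≤ nint x + nint y := abs_add_le _ _

lemma nint_sum_le {ι : Type*} (s : Finset ι) (x : ι → ℝ) :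
    nint (∑ i ∈ s, x i) ≤ ∑ i ∈ s, nint (x i) :=
  le_sum_of_subadditive nint (by simp [nint]) nint_add_le s x

lemma nint_of_nonneg_of_le_half {x : ℝ} (h0 : 0 ≤ x) (h1 : x ≤ 1 / 2) : nint x = x := by
  rw [nint, abs_sub_round_eq_min, Int.fract_eq_self.2 ⟨h0, by linarith⟩]
  exact min_eq_left (by linarith)

lemma nint_sum_sub_round {ι : Type*} (s : Finset ι) (x : ι → ℝ) :
    nint (∑ i ∈ s, (x i - round (x i))) = nint (∑ i ∈ s, x i) := by
  simpa [sum_sub_distrib] using nint_sub_intCast (∑ i ∈ s, x i) (∑ i ∈ s, round (x i))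

lemma sum_lt_of_forall_subset_nint_sum_lt {ι : Type*} {s : Finset ι} {z : ι → ℝ} {δ : ℝ}
    (hδ : δ ≤ 1 / 4) (hz : ∀ i ∈ s, 0 ≤ z i ∧ z i ≤ 1 / 2)
    (h : ∀ u ⊆ s, nint (∑ i ∈ u, z i) < δ) : ∑ i ∈ s, z i < δ := by
  classical
  induction s using Finset.induction_on with
  | empty => simpa [nint] using h ∅ subset_rfl
  | @insert i s hi ih =>
    have hs : ∑ j ∈ s, z j < δ := ih (fun j hj => hz j (mem_insert_of_mem hj))
      (fun u hu => h u (hu.trans (subset_insert i s)))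
    obtain ⟨hzi0, hzi1⟩ := hz i (mem_insert_self i s)
    have hi_lt : z i < δ := by
      simpa [nint_of_nonneg_of_le_half hzi0 hzi1] using
        h {i} (singleton_subset_iff.2 (mem_insert_self i s))
    have hs0 : 0 ≤ ∑ j ∈ s, z j := sum_nonneg fun j hj => (hz j (mem_insert_of_mem hj)).1
    have := h _ subset_rfl
    rw [sum_insert hi] at this ⊢
    rwa [nint_of_nonneg_of_le_half (by linarith) (by linarith)] at this

lemma summable_abs_of_forall_nint_sum_lt {ι : Type*} {y : ι → ℝ} (hy : ∀ i, |y i| ≤ 1 / 2)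
    (h : ∀ u : Finset ι, nint (∑ i ∈ u, y i) < 1 / 8) : Summable fun i => |y i| := by
  classical
  refine summable_of_sum_le (c := 1 / 4) (fun i => abs_nonneg (y i)) fun u => ?_
  have hpos : ∑ i ∈ u with 0 ≤ y i, y i < 1 / 8 :=
    sum_lt_of_forall_subset_nint_sum_lt (by norm_num)
      (fun i hi => ⟨(mem_filter.1 hi).2, (le_abs_self _).trans (hy i)⟩) fun v _ => h v
  have hneg : ∑ i ∈ u with ¬ 0 ≤ y i, -y i < 1 / 8 :=
    sum_lt_of_forall_subset_nint_sum_lt (by norm_num)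
      (fun i hi => ⟨by linarith [(mem_filter.1 hi).2], (neg_le_abs _).trans (hy i)⟩)
      fun v _ => by simpa [sum_neg_distrib, nint_neg] using h v
  have hsplit : ∑ i ∈ u, |y i| = ∑ i ∈ u with 0 ≤ y i, y i + ∑ i ∈ u with ¬ 0 ≤ y i, -y i := by
    rw [← sum_filter_add_sum_filter_not u (fun i => 0 ≤ y i)]
    congr 1 <;> refine sum_congr rfl fun i hi => ?_ <;> have := (mem_filter.1 hi).2
    · exact abs_of_nonneg this
    · exact abs_of_neg (not_le.1 this)
  linarith

theorem summable_nint_of_forall_nint_sum_lt {x : ℕ → ℝ} {K : ℕ}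
    (h : ∀ F : Finset ℕ, ∀ hF : F.Nonempty, K ≤ F.min' hF → nint (∑ j ∈ F, x j) < 1 / 8) :
    Summable fun n => nint (x n) := by
  rw [← summable_nat_add_iff K]
  refine summable_abs_of_forall_nint_sum_lt (y := fun n => x (n + K) - round (x (n + K)))
    (fun n => abs_sub_round _) fun u => ?_
  rw [nint_sum_sub_round]
  rcases u.eq_empty_or_nonempty with rfl | hu
  · simp [nint]
  · simpa [sum_map] using h (u.map (addRightEmbedding K)) (hu.map)
      (le_min' _ _ _ fun j hj => by obtain ⟨n, -, rfl⟩ := mem_map.1 hj; simp)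

theorem Summable.forall_nint_sum_lt {x : ℕ → ℝ} (hx : Summable fun n => nint (x n))
    {ε : ℝ} (hε : 0 < ε) :
    ∃ K : ℕ, ∀ F : Finset ℕ, ∀ hF : F.Nonempty, K ≤ F.min' hF → nint (∑ j ∈ F, x j) < ε := by
  obtain ⟨s, hs⟩ := summable_iff_vanishing.1 hx (Metric.ball 0 ε) (Metric.ball_mem_nhds 0 hε)
  obtain ⟨K, hK⟩ := s.exists_nat_subset_range
  refine ⟨K, fun F hF hmin => ?_⟩
  have hdisj : Disjoint F s := disjoint_left.2 fun j hjF hjs =>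
    (mem_range.1 (hK hjs)).not_ge (hmin.trans (F.min'_le j hjF))
  have hsmall := hs F hdisj
  rw [Metric.mem_ball, Real.dist_eq, sub_zero] at hsmall
  exact (nint_sum_le F x).trans_lt ((le_abs_self _).trans_lt hsmall)

theorem forall_nint_sum_lt_iff_summable (x : ℕ → ℝ) :
    (∀ ε > 0, ∃ K : ℕ, ∀ F : Finset ℕ, ∀ hF : F.Nonempty,
        K ≤ F.min' hF → nint (∑ j ∈ F, x j) < ε) ↔ Summable fun n => nint (x n) :=
  ⟨fun h => (h (1 / 8) (by norm_num)).elim fun _ hK => summable_nint_of_forall_nint_sum_lt hK,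
    fun hx _ hε => hx.forall_nint_sum_lt hε⟩

theorem stmt1_general (b : ℕ → ℕ) :
    {t : ℝ | ∀ ε > 0, ∃ K : ℕ, ∀ F : Finset ℕ, ∀ hF : F.Nonempty,
        K ≤ F.min' hF → nint ((∑ j ∈ F, b j : ℕ) * t) < ε}
      = {t : ℝ | Summable (fun n => nint ((b n : ℝ) * t))} := by
  ext t
  simpa only [Set.mem_ofPred_eq, Nat.cast_sum, sum_mul] using
    forall_nint_sum_lt_iff_summable fun n => (b n : ℝ) * t

/-- The IP-Dirichlet set `Γ(FS(b))` equals `G₁(b)`.  (Both sets are invariant under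
translation by integers, i.e. they are genuinely subsets of `ℝ/ℤ`.) -/
theorem stmt1 (b : ℕ → ℕ) (hb : StrictMono b) (hbpos : ∀ n, 0 < b n) :
    {t : ℝ | ∀ ε > 0, ∃ K : ℕ, ∀ F : Finset ℕ, ∀ hF : F.Nonempty,
        K ≤ F.min' hF → nint ((∑ j ∈ F, b j : ℕ) * t) < ε}
      = {t : ℝ | Summable (fun n => nint ((b n : ℝ) * t))} :=
  stmt1_general b
end

section
/- For the Erdős–Taylor sequence with a_n = n+1 (i.e. b₁ = 1, b_{n+1} = (n+1) b_n + 1), the group G₁(b) = {t ∈ ℝ/ℤ : ∑_n ‖b_n t‖ < ∞} equals {0}. -/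
/-!
Write `δ = ‖t‖` and `cₙ = ‖bₙ t‖`. Since `bₙ₊₁ t = aₙ (bₙ t) + t`, the triangle inequality gives
`δ ≤ cₙ₊₁ + aₙ cₙ`. If `∑ cₙ < ∞` then `cₙ₊₁ → 0`, so eventually `cₙ ≥ δ / (2 aₙ)`; as `∑ 1/aₙ`
diverges (here `aₙ = n + 1`, the harmonic series), this forces `δ = 0`.
-/

/-- `G₁(b)` inside the circle `ℝ/ℤ`; the norm on `AddCircle (1:ℝ)` is the
distance to the nearest integer. -/
noncomputable def G1 (b : ℕ → ℕ) : Set (AddCircle (1:ℝ)) :=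
  {t | Summable (fun n => ‖b n • t‖)}

open Filter

lemma norm_le_norm_nsmul_mul_add_one {G : Type*} [SeminormedAddCommGroup G] (t : G) (a k : ℕ) :
    ‖t‖ ≤ ‖(a * k + 1) • t‖ + a * ‖k • t‖ := by
  have ht : t = (a * k + 1) • t - a • (k • t) := by rw [add_smul, one_smul, mul_smul]; abel
  calc ‖t‖ = ‖(a * k + 1) • t - a • (k • t)‖ := congrArg norm ht
    _ ≤ ‖(a * k + 1) • t‖ + ‖a • (k • t)‖ := norm_sub_le _ _
    _ ≤ ‖(a * k + 1) • t‖ + a * ‖k • t‖ := by gcongr; exact norm_nsmul_le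

lemma nonpos_of_le_add_mul_of_summable {a c : ℕ → ℝ} {δ : ℝ} (ha : ∀ n, 0 ≤ a n)
    (ha_inv : ¬Summable fun n => (a n)⁻¹) (hc : Summable c)
    (hδ : ∀ᶠ n in atTop, δ ≤ c (n + 1) + a n * c n) : δ ≤ 0 := by
  by_contra! hδ_pos
  have hc_small : ∀ᶠ n in atTop, c (n + 1) < δ / 2 :=
    (tendsto_add_atTop_iff_nat 1).mpr hc.tendsto_atTop_zero |>.eventually
      (gt_mem_nhds (half_pos hδ_pos))
  have hc_large : ∀ᶠ n in atTop, ‖δ / 2 * (a n)⁻¹‖ ≤ c n := by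
    filter_upwards [hδ, hc_small] with n hn hn_small
    have han : 0 < a n := by
      refine (ha n).lt_of_ne' fun h => ?_
      rw [h, zero_mul, add_zero] at hn
      linarith
    rw [Real.norm_of_nonneg (by positivity), ← div_eq_mul_inv, div_le_iff₀ han]
    linarith
  exact ha_inv <| ((Summable.of_norm_bounded_eventually_nat hc hc_large).mul_left (δ / 2)⁻¹).congr
    fun n => by field_simp

theorem eq_zero_of_summable_norm_nsmul {G : Type*} [NormedAddCommGroup G] {a b : ℕ → ℕ}
    (ha : ¬Summable fun n => ((a n : ℝ))⁻¹) (hrec : ∀ᶠ n in atTop, b (n + 1) = a n * b n + 1)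
    {t : G} (ht : Summable fun n => ‖b n • t‖) : t = 0 := by
  refine norm_le_zero_iff.mp <|
    nonpos_of_le_add_mul_of_summable (fun n => (a n).cast_nonneg) ha ht ?_
  filter_upwards [hrec] with n hn
  rw [hn]
  exact norm_le_norm_nsmul_mul_add_one t (a n) (b n)

theorem stmt10_general (b : ℕ → ℕ)
    (hrec : ∀ n, 1 ≤ n → b (n + 1) = (n + 1) * b n + 1) :
    G1 b = {0} := by
  have harmonic : ¬Summable fun n : ℕ => (((n + 1 : ℕ) : ℝ))⁻¹ :=
    mt (summable_nat_add_iff (f := fun n : ℕ => (n : ℝ)⁻¹) 1).mp Real.not_summable_natCast_inv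
  ext t
  refine ⟨fun ht => eq_zero_of_summable_norm_nsmul harmonic (eventually_atTop.mpr ⟨1, hrec⟩) ht,
    fun ht => ?_⟩
  rw [Set.mem_singleton_iff.mp ht]
  simp [G1]

/-- For the Erdős–Taylor sequence with `aₙ = n + 1`, i.e. `b₁ = 1`,
`bₙ₊₁ = (n+1) bₙ + 1`, the group `G₁(b)` is trivial. -/
theorem stmt10 (b : ℕ → ℕ) (hb1 : b 1 = 1)
    (hrec : ∀ n, 1 ≤ n → b (n + 1) = (n + 1) * b n + 1) (hb0 : b 0 = 1) :
    G1 b = {0} :=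
  stmt10_general b hrec
end
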